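/- arXiv:1210.3800 — 8 statements merged into one kernel-verified Lean document; each statement's English description precedes it below -/
import Mathlib

section
/- Let g : ℝ → ℝ be locally Lipschitz. Let x ∈ ℝ, let w : [0,∞) → ℝ be continuous, and let a : [0,∞) → ℝ be locally integrable. Suppose Y : [0,∞) → ℝ is defined by Y(t) = x + ∫₀ᵗ a(s) ds + w(t), and Ŷ : [0,∞) → ℝ is continuous and satisfies Ŷ(t) = x + ∫₀ᵗ g(Ŷ(s)) ds + w(t) for all t ≥ 0. If a(s) ≤ g(Y(s)) for almost every s ≥ 0, then Y(t) ≤ Ŷ(t) for all t ≥ 0. -/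
open MeasureTheory intervalIntegral

lemma locallyLipschitz_abs_sub_le_Icc (g : ℝ → ℝ) (hg : LocallyLipschitz g) (m M : ℝ) :
    ∃ L : ℝ, 0 ≤ L ∧ ∀ p ∈ Set.Icc m M, ∀ q ∈ Set.Icc m M, |g p - g q| ≤ L * |p - q| := by
  by_cases hmM : m ≤ M
  · set S : Set ℝ := {b | b ∈ Set.Icc m M ∧
      ∃ L : ℝ, 0 ≤ L ∧ ∀ p ∈ Set.Icc m b, ∀ q ∈ Set.Icc m b, |g p - g q| ≤ L * |p - q|}
      with hSdef
    have hmS : m ∈ S := by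
      refine ⟨⟨le_refl m, hmM⟩, 0, le_refl 0, ?_⟩
      intro p hp q hq
      have hp' : p = m := le_antisymm hp.2 hp.1
      have hq' : q = m := le_antisymm hq.2 hq.1
      simp [hp', hq']
    have hbdd : BddAbove S := ⟨M, fun b hb => hb.1.2⟩
    set T := sSup S with hT
    have hTm : m ≤ T := le_csSup hbdd hmS
    have hTM : T ≤ M := csSup_le ⟨m, hmS⟩ (fun b hb => hb.1.2)
    obtain ⟨K, tset, htmem, hK⟩ := hg T
    obtain ⟨ε, hε, hball⟩ := Metric.mem_nhds_iff.1 htmem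
    obtain ⟨b, hbS, hb⟩ := exists_lt_of_lt_csSup ⟨m, hmS⟩ (show T - ε/2 < T by linarith)
    have hbT : b ≤ T := le_csSup hbdd hbS
    obtain ⟨⟨hmb, hbM⟩, L, hL0, hLb⟩ := hbS
    set b' := min M (T + ε/2) with hb'
    set L' := max L (K : ℝ) with hL'
    have hL'0 : 0 ≤ L' := le_trans hL0 (le_max_left _ _)
    have hballmem : ∀ z : ℝ, T - ε/2 < z → z ≤ T + ε/2 → z ∈ tset := by
      intro z h1 h2
      apply hball
      simp only [Metric.mem_ball, Real.dist_eq]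
      rw [abs_lt]; constructor <;> linarith
    have hdist : ∀ p ∈ tset, ∀ q ∈ tset, |g p - g q| ≤ (K : ℝ) * |p - q| := by
      intro p hp q hq
      have := hK.dist_le_mul p hp q hq
      simpa [Real.dist_eq] using this
    have key : ∀ p ∈ Set.Icc m b', ∀ q ∈ Set.Icc m b', p ≤ q → |g p - g q| ≤ L' * |p - q| := by
      intro p hp q hq hpq
      by_cases hqb : q ≤ b
      · calc |g p - g q| ≤ L * |p - q| :=
              hLb p ⟨hp.1, le_trans hpq hqb⟩ q ⟨hq.1, hqb⟩
          _ ≤ L' * |p - q| := by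
              apply mul_le_mul_of_nonneg_right (le_max_left _ _) (abs_nonneg _)
      · push_neg at hqb
        have hq2 : q ≤ T + ε/2 := le_trans hq.2 (min_le_right _ _)
        have hqt : q ∈ tset := hballmem q (by linarith) hq2
        have hbt : b ∈ tset := hballmem b (by linarith) (by linarith)
        by_cases hpb : b ≤ p
        · have hpt : p ∈ tset := hballmem p (by linarith) (le_trans hpq hq2)
          calc |g p - g q| ≤ (K : ℝ) * |p - q| := hdist p hpt q hqt
            _ ≤ L' * |p - q| := mul_le_mul_of_nonneg_right (le_max_right _ _) (abs_nonneg _)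
        · push_neg at hpb
          have h1 : |g p - g b| ≤ L * |p - b| := hLb p ⟨hp.1, le_of_lt hpb⟩ b ⟨hmb, le_refl b⟩
          have h2 : |g b - g q| ≤ (K : ℝ) * |b - q| := hdist b hbt q hqt
          have habs1 : |p - b| = b - p := by rw [abs_sub_comm]; exact abs_of_nonneg (by linarith)
          have habs2 : |b - q| = q - b := by rw [abs_sub_comm]; exact abs_of_nonneg (by linarith)
          have habs3 : |p - q| = q - p := by rw [abs_sub_comm]; exact abs_of_nonneg (by linarith)
          calc |g p - g q| ≤ |g p - g b| + |g b - g q| := abs_sub_le _ _ _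
            _ ≤ L * |p - b| + (K : ℝ) * |b - q| := add_le_add h1 h2
            _ ≤ L' * |p - b| + L' * |b - q| := add_le_add
                (mul_le_mul_of_nonneg_right (le_max_left _ _) (abs_nonneg _))
                (mul_le_mul_of_nonneg_right (le_max_right _ _) (abs_nonneg _))
            _ = L' * |p - q| := by rw [habs1, habs2, habs3]; ring
    have key' : ∀ p ∈ Set.Icc m b', ∀ q ∈ Set.Icc m b', |g p - g q| ≤ L' * |p - q| := by
      intro p hp q hq
      rcases le_total p q with h | h
      · exact key p hp q hq h
      · rw [abs_sub_comm (g p), abs_sub_comm p]; exact key q hq p hp h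
    have hb'S : b' ∈ S := ⟨⟨le_min hmM (by linarith), min_le_left _ _⟩, L', hL'0, key'⟩
    have hb'T : b' ≤ T := le_csSup hbdd hb'S
    have hTMeq : T = M := by
      by_contra hne
      have hTltM : T < M := lt_of_le_of_ne hTM hne
      have : T < b' := lt_min hTltM (by linarith)
      linarith
    have hb'M : b' = M := by rw [hb', hTMeq]; exact min_eq_left (by linarith)
    rw [hb'M] at key'
    exact ⟨L', hL'0, key'⟩
  · refine ⟨0, le_refl 0, ?_⟩
    intro p hp
    exact absurd (le_trans hp.1 hp.2) hmM

/-- Pathwise comparison: the solution `Ŷ` of the integral equation with locally Lipschitz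
drift `g` dominates any process `Y` with a.e. smaller drift density `a`. -/
theorem extremal_pathwise_comparison
    (g : ℝ → ℝ) (hg : LocallyLipschitz g)
    (x : ℝ) (w : ℝ → ℝ) (hw : ContinuousOn w (Set.Ici 0))
    (a : ℝ → ℝ) (ha : LocallyIntegrableOn a (Set.Ici 0))
    (Y Yhat : ℝ → ℝ)
    (hY : ∀ t ≥ (0:ℝ), Y t = x + (∫ s in (0:ℝ)..t, a s) + w t)
    (hYhat_cont : ContinuousOn Yhat (Set.Ici 0))
    (hYhat : ∀ t ≥ (0:ℝ), Yhat t = x + (∫ s in (0:ℝ)..t, g (Yhat s)) + w t)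
    (hle : ∀ᵐ s ∂(volume : Measure ℝ), 0 ≤ s → a s ≤ g (Y s)) :
    ∀ t ≥ (0:ℝ), Y t ≤ Yhat t := by
  intro t ht
  by_contra hcon
  push_neg at hcon
  have hsub : Set.Icc (0:ℝ) t ⊆ Set.Ici 0 := fun s hs => hs.1
  -- integrability of a on [0,t]
  have haInt : IntegrableOn a (Set.Icc 0 t) volume :=
    ha.integrableOn_compact_subset hsub isCompact_Icc
  have ha_ii : ∀ p q : ℝ, 0 ≤ p → p ≤ q → q ≤ t → IntervalIntegrable a volume p q := by
    intro p q hp hpq hq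
    apply MeasureTheory.IntegrableOn.intervalIntegrable
    apply haInt.mono_set
    rw [Set.uIcc_of_le hpq]
    exact Set.Icc_subset_Icc hp hq
  -- continuity of the primitive of a, hence of Y, on [0,t]
  have hprim : ContinuousOn (fun r => ∫ s in (0:ℝ)..r, a s) (Set.Icc 0 t) := by
    have h1 : IntegrableOn a (Set.uIcc 0 t) volume := by rwa [Set.uIcc_of_le ht]
    have := intervalIntegral.continuousOn_primitive_interval (μ := volume) (a := 0) (b := t) h1
    rwa [Set.uIcc_of_le ht] at this
  have hYcont : ContinuousOn Y (Set.Icc 0 t) :=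
    (((continuousOn_const.add hprim).add (hw.mono hsub))).congr (fun r hr => hY r hr.1)
  have hYhcont : ContinuousOn Yhat (Set.Icc 0 t) := hYhat_cont.mono hsub
  -- clamp
  set c : ℝ → ℝ := fun s => min (max s 0) t with hcdef
  have hc : Continuous c := (continuous_id.max continuous_const).min continuous_const
  have hcmem : ∀ s, c s ∈ Set.Icc (0:ℝ) t := fun s =>
    ⟨le_min (le_max_right _ _) ht, min_le_right _ _⟩
  have hcid : ∀ s ∈ Set.Icc (0:ℝ) t, c s = s := by
    intro s hs
    simp only [hcdef]
    rw [max_eq_left hs.1, min_eq_left hs.2]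
  have hYcC : Continuous (fun s => Y (c s)) := hYcont.comp_continuous hc hcmem
  have hYhcC : Continuous (fun s => Yhat (c s)) := hYhcont.comp_continuous hc hcmem
  -- the function u
  set u : ℝ → ℝ := fun s => max (Y (c s) - Yhat (c s)) 0 with hudef
  have hu : Continuous u := (hYcC.sub hYhcC).max continuous_const
  have hu0 : ∀ s, 0 ≤ u s := fun s => le_max_right _ _
  have hueq : ∀ s ∈ Set.Icc (0:ℝ) t, u s = max (Y s - Yhat s) 0 := by
    intro s hs; simp only [hudef, hcid s hs]
  -- Lipschitz constant on a compact range
  set A : Set ℝ := Y '' Set.Icc 0 t ∪ Yhat '' Set.Icc 0 t with hAdef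
  have hAcomp : IsCompact A :=
    (isCompact_Icc.image_of_continuousOn hYcont).union
      (isCompact_Icc.image_of_continuousOn hYhcont)
  obtain ⟨R, hR⟩ := hAcomp.isBounded.subset_closedBall 0
  rw [Real.closedBall_eq_Icc] at hR
  obtain ⟨L, hL0, hLip⟩ := locallyLipschitz_abs_sub_le_Icc g hg (0 - R) (0 + R)
  have hYmem : ∀ s ∈ Set.Icc (0:ℝ) t, Y s ∈ Set.Icc (0 - R) (0 + R) :=
    fun s hs => hR (Set.mem_union_left _ ⟨s, hs, rfl⟩)
  have hYhmem : ∀ s ∈ Set.Icc (0:ℝ) t, Yhat s ∈ Set.Icc (0 - R) (0 + R) :=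
    fun s hs => hR (Set.mem_union_right _ ⟨s, hs, rfl⟩)
  -- integrability of g ∘ Yhat
  have hgYh_cont : ContinuousOn (fun s => g (Yhat s)) (Set.Icc 0 t) :=
    hg.continuous.comp_continuousOn hYhcont
  have hgYh_ii : ∀ p q : ℝ, 0 ≤ p → p ≤ q → q ≤ t →
      IntervalIntegrable (fun s => g (Yhat s)) volume p q := by
    intro p q hp hpq hq
    apply ContinuousOn.intervalIntegrable
    apply hgYh_cont.mono
    rw [Set.uIcc_of_le hpq]
    exact Set.Icc_subset_Icc hp hq
  -- difference formula
  have hZ : ∀ r ∈ Set.Icc (0:ℝ) t, Y r - Yhat r =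
      (∫ s in (0:ℝ)..r, a s) - ∫ s in (0:ℝ)..r, g (Yhat s) := by
    intro r hr
    rw [hY r hr.1, hYhat r hr.1]; ring
  -- the last time before t that Y ≤ Yhat
  set S : Set ℝ := Set.Icc 0 t ∩ {s | Y (c s) ≤ Yhat (c s)} with hSdef
  have hScomp : IsCompact S := isCompact_Icc.inter_right (isClosed_le hYcC hYhcC)
  have h0S : (0:ℝ) ∈ S := by
    refine ⟨⟨le_refl 0, ht⟩, ?_⟩
    have h0 : c 0 = 0 := hcid 0 ⟨le_refl 0, ht⟩
    simp only [Set.mem_setOf_eq, h0]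
    rw [hY 0 (le_refl 0), hYhat 0 (le_refl 0)]
    simp [intervalIntegral.integral_same]
  have hbddS : BddAbove S := ⟨t, fun b hb => hb.1.2⟩
  set τ := sSup S with hτdef
  have hτS : τ ∈ S := hScomp.sSup_mem ⟨0, h0S⟩
  have hτ0 : 0 ≤ τ := hτS.1.1
  have hτle : τ ≤ t := hτS.1.2
  have hYτ : Y τ ≤ Yhat τ := by
    have := hτS.2
    rwa [Set.mem_setOf_eq, hcid τ hτS.1] at this
  have hτt : τ < t := by
    rcases lt_or_eq_of_le hτle with h | h
    · exact h
    · exfalso; rw [h] at hYτ; linarith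
  have hgt : ∀ s, τ < s → s ≤ t → Yhat s < Y s := by
    intro s hs1 hs2
    by_contra hns
    push_neg at hns
    have hsS : s ∈ S := by
      refine ⟨⟨le_trans hτ0 (le_of_lt hs1), hs2⟩, ?_⟩
      rw [Set.mem_setOf_eq, hcid s ⟨le_trans hτ0 (le_of_lt hs1), hs2⟩]
      exact hns
    exact absurd (le_csSup hbddS hsS) (not_le.2 hs1)
  -- key Gronwall-type inequality
  have huτ : u τ = 0 := by
    rw [hueq τ hτS.1]
    exact max_eq_right (by linarith)
  have hkey : ∀ r ∈ Set.Icc τ t, u r ≤ L * ∫ s in τ..r, u s := by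
    intro r hr
    rcases eq_or_lt_of_le hr.1 with heq | hlt
    · rw [← heq, intervalIntegral.integral_same, mul_zero, huτ]
    · have hr0 : (0:ℝ) ≤ r := le_trans hτ0 (le_of_lt hlt)
      have hrIcc : r ∈ Set.Icc (0:ℝ) t := ⟨hr0, hr.2⟩
      have hYr : Yhat r < Y r := hgt r hlt hr.2
      have hur : u r = Y r - Yhat r := by
        rw [hueq r hrIcc]; exact max_eq_left (by linarith)
      have e1 : (∫ s in (0:ℝ)..r, a s) - (∫ s in (0:ℝ)..τ, a s) = ∫ s in τ..r, a s :=
        intervalIntegral.integral_interval_sub_left (ha_ii 0 r (le_refl 0) hr0 hr.2)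
          (ha_ii 0 τ (le_refl 0) hτ0 hτle)
      have e2 : (∫ s in (0:ℝ)..r, g (Yhat s)) - (∫ s in (0:ℝ)..τ, g (Yhat s))
          = ∫ s in τ..r, g (Yhat s) :=
        intervalIntegral.integral_interval_sub_left (hgYh_ii 0 r (le_refl 0) hr0 hr.2)
          (hgYh_ii 0 τ (le_refl 0) hτ0 hτle)
      have hiiA : IntervalIntegrable a volume τ r := ha_ii τ r hτ0 (le_of_lt hlt) hr.2
      have hiiG : IntervalIntegrable (fun s => g (Yhat s)) volume τ r := hgYh_ii τ r hτ0 (le_of_lt hlt) hr.2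
      have e3 : (∫ s in τ..r, a s) - (∫ s in τ..r, g (Yhat s))
          = ∫ s in τ..r, (a s - g (Yhat s)) := (intervalIntegral.integral_sub hiiA hiiG).symm
      have step2 : (Y r - Yhat r) - (Y τ - Yhat τ) = ∫ s in τ..r, (a s - g (Yhat s)) := by
        rw [hZ r hrIcc, hZ τ hτS.1, ← e3, ← e1, ← e2]; ring
      -- a.e. bound on [τ, r]
      have hne : ∀ᵐ s ∂(volume : Measure ℝ), s ≠ τ := by
        refine ae_iff.2 ?_
        simp
      have hae : (fun s => a s - g (Yhat s)) ≤ᵐ[volume.restrict (Set.Icc τ r)]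
          fun s => L * u s := by
        filter_upwards [ae_restrict_mem measurableSet_Icc,
          ae_restrict_of_ae hle, ae_restrict_of_ae hne] with s hsmem hsle hsne
        have hτs : τ < s := lt_of_le_of_ne hsmem.1 (Ne.symm hsne)
        have hs0 : (0:ℝ) ≤ s := le_trans hτ0 (le_of_lt hτs)
        have hst : s ≤ t := le_trans hsmem.2 hr.2
        have hYs : Yhat s < Y s := hgt s hτs hst
        have hus : u s = Y s - Yhat s := by
          rw [hueq s ⟨hs0, hst⟩]; exact max_eq_left (by linarith)
        have h1 : a s ≤ g (Y s) := hsle hs0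
        have h2 : |g (Y s) - g (Yhat s)| ≤ L * |Y s - Yhat s| :=
          hLip (Y s) (hYmem s ⟨hs0, hst⟩) (Yhat s) (hYhmem s ⟨hs0, hst⟩)
        have h3 : |Y s - Yhat s| = Y s - Yhat s := abs_of_pos (by linarith)
        calc a s - g (Yhat s) ≤ g (Y s) - g (Yhat s) := by linarith
          _ ≤ |g (Y s) - g (Yhat s)| := le_abs_self _
          _ ≤ L * |Y s - Yhat s| := h2
          _ = L * u s := by rw [h3, hus]
      have step3 : (∫ s in τ..r, (a s - g (Yhat s))) ≤ ∫ s in τ..r, L * u s :=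
        intervalIntegral.integral_mono_ae_restrict (le_of_lt hlt) (hiiA.sub hiiG)
          ((continuous_const.mul hu).intervalIntegrable τ r) hae
      have step4 : (∫ s in τ..r, L * u s) = L * ∫ s in τ..r, u s :=
        intervalIntegral.integral_const_mul L u
      rw [hur]
      calc Y r - Yhat r ≤ (Y r - Yhat r) - (Y τ - Yhat τ) := by linarith
        _ = ∫ s in τ..r, (a s - g (Yhat s)) := step2
        _ ≤ ∫ s in τ..r, L * u s := step3
        _ = L * ∫ s in τ..r, u s := step4
  -- Gronwall
  set φ : ℝ → ℝ := fun r => ∫ s in τ..r, u s with hφdef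
  have hφ0 : ∀ r ∈ Set.Icc τ t, 0 ≤ φ r := fun r hr =>
    intervalIntegral.integral_nonneg hr.1 (fun s _ => hu0 s)
  have hd : ∀ r : ℝ, HasDerivAt φ (u r) r := by
    intro r
    exact intervalIntegral.integral_hasDerivAt_right (hu.intervalIntegrable τ r)
      (hu.stronglyMeasurableAtFilter volume (nhds r)) hu.continuousAt
  have hφcont : ContinuousOn φ (Set.Icc τ t) :=
    fun r _ => (hd r).continuousAt.continuousWithinAt
  have hgron := norm_le_gronwallBound_of_norm_deriv_right_le (f := φ) (f' := u)
    (δ := 0) (K := L) (ε := 0) (a := τ) (b := t) hφcont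
    (fun r _ => (hd r).hasDerivWithinAt)
    (by
      have hφτ : φ τ = 0 := intervalIntegral.integral_same
      rw [hφτ, norm_zero])
    (by
      intro r hrmem
      have hr' : r ∈ Set.Icc τ t := ⟨hrmem.1, le_of_lt hrmem.2⟩
      rw [Real.norm_eq_abs, Real.norm_eq_abs, abs_of_nonneg (hu0 r),
        abs_of_nonneg (hφ0 r hr'), add_zero]
      exact hkey r hr')
  have hφt : ‖φ t‖ ≤ 0 := by
    have := hgron t ⟨hτle, le_refl t⟩
    rwa [gronwallBound_ε0_δ0] at this
  have hφt0 : φ t = 0 := by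
    have := abs_nonneg (φ t)
    rw [Real.norm_eq_abs] at hφt
    have : |φ t| = 0 := le_antisymm hφt (abs_nonneg _)
    exact abs_eq_zero.1 this
  have hut : u t ≤ 0 := by
    have h := hkey t ⟨hτle, le_refl t⟩
    have h0 : (∫ s in τ..t, u s) = 0 := hφt0
    rw [h0, mul_zero] at h
    exact h
  have : u t = Y t - Yhat t := by
    rw [hueq t ⟨ht, le_refl t⟩]; exact max_eq_left (by linarith)
  linarith [hu0 t, hcon, this ▸ hut]
end

section
/- Let h : [0,∞) → ℝ be locally integrable and define f(t) = ∫₀ᵗ h(s) ds. Then for every t ≥ 0, the positive part satisfies f(t)⁺ ≤ ∫₀ᵗ 𝟙{f(s) > 0} · h(s) ds, where f(t)⁺ = max(f(t), 0). -/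
/-!
Since `f` is absolutely continuous on `[0, t]`, so is `f⁺ = max f 0`, and the fundamental theorem
of calculus for absolutely continuous functions gives `f(t)⁺ = ∫₀ᵗ (f⁺)'`. At a point where
`f > 0`, `f⁺` coincides with `f` nearby, so `(f⁺)' = f' = h` almost everywhere there; where
`f < 0` it vanishes nearby; and where `f = 0` the point is a minimum of `f⁺`, so `deriv` of `f⁺`
is `0` (whether or not `f⁺` is differentiable there, by the junk-value convention). Hence the
inequality is in fact an equality.
-/

open MeasureTheory intervalIntegral Set Filter Topology

theorem LipschitzWith.comp_absolutelyContinuousOnInterval {X Y : Type*} [PseudoMetricSpace X]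
    [PseudoMetricSpace Y] {g : X → Y} {K : NNReal} {f : ℝ → X} {a b : ℝ}
    (hg : LipschitzWith K g) (hf : AbsolutelyContinuousOnInterval f a b) :
    AbsolutelyContinuousOnInterval (g ∘ f) a b := by
  unfold AbsolutelyContinuousOnInterval at hf ⊢
  refine squeeze_zero (fun _ ↦ Finset.sum_nonneg fun _ _ ↦ dist_nonneg) (fun E ↦ ?_)
    (by simpa using hf.const_mul (K : ℝ))
  rw [Finset.mul_sum]
  exact Finset.sum_le_sum fun i _ ↦ hg.dist_le_mul _ _

theorem deriv_max_zero {F : ℝ → ℝ} {x : ℝ} (hF : ContinuousAt F x) :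
    deriv (fun y ↦ max (F y) 0) x = if 0 < F x then deriv F x else 0 := by
  split_ifs with hpos
  · have hev : (fun y ↦ max (F y) 0) =ᶠ[𝓝 x] F := by
      filter_upwards [hF.eventually (lt_mem_nhds hpos)] with y hy using max_eq_left hy.le
    exact hev.deriv_eq
  · rcases (not_lt.1 hpos).lt_or_eq with hneg | hzero
    · have hev : (fun y ↦ max (F y) 0) =ᶠ[𝓝 x] fun _ ↦ 0 := by
        filter_upwards [hF.eventually (gt_mem_nhds hneg)] with y hy using max_eq_right hy.le
      simp [hev.deriv_eq]
    · refine IsLocalMin.deriv_eq_zero (Eventually.of_forall fun y ↦ ?_)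
      simp [hzero]

/-- For `f(t) = ∫₀ᵗ h`, the positive part of `f(t)` is bounded by the integral of `h`
restricted to the set where `f` is positive. -/
theorem posPart_le_integral_indicator
    (h : ℝ → ℝ) (hh : LocallyIntegrableOn h (Set.Ici 0))
    (f : ℝ → ℝ) (hf : ∀ t, f t = ∫ s in (0:ℝ)..t, h s) :
    ∀ t ≥ (0:ℝ), max (f t) 0 ≤ ∫ s in (0:ℝ)..t, (if 0 < f s then h s else 0) := by
  intro t ht
  have hfh : f = fun t ↦ ∫ s in (0:ℝ)..t, h s := funext hf
  have hI : IntervalIntegrable h volume 0 t :=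
    (hh.integrableOn_compact_subset (by simp [uIcc_of_le ht, Icc_subset_Ici_self])
      isCompact_uIcc).intervalIntegrable
  have hac : AbsolutelyContinuousOnInterval (fun s ↦ max (f s) 0) 0 t := by
    rw [hfh]
    exact (LipschitzWith.id.max_const 0).comp_absolutelyContinuousOnInterval
      (hI.absolutelyContinuousOnInterval_intervalIntegral (by simp))
  have hderiv : ∀ᵐ s, s ∈ uIoc 0 t →
      deriv (fun y ↦ max (f y) 0) s = if 0 < f s then h s else 0 := by
    filter_upwards [hI.ae_hasDerivAt_integral] with s hs hsI
    have hfs : HasDerivAt f (h s) s := hfh ▸ hs (uIoc_subset_uIcc hsI) 0 (by simp)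
    rw [deriv_max_zero hfs.continuousAt, hfs.deriv]
  calc max (f t) 0 = ∫ s in 0..t, deriv (fun y ↦ max (f y) 0) s := by
        simp [hac.integral_deriv_eq_sub, hf 0]
    _ ≤ _ := (integral_congr_ae hderiv).le
end

section
/- Let h : [0,∞) → ℝ be locally integrable, define D(t) = ∫₀ᵗ h(s) ds, and let L ≥ 0. If for almost every s ≥ 0 the implication D(s) > 0 ⟹ h(s) ≤ L · D(s) holds, then D(t) ≤ 0 for all t ≥ 0. -/
open MeasureTheory intervalIntegral

/-- Gronwall-type lemma: if `D(t) = ∫₀ᵗ h` and a.e. on `{D > 0}` the density satisfies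
`h ≤ L·D`, then `D ≤ 0` everywhere on `[0,∞)`. -/
theorem gronwall_nonpos
    (h : ℝ → ℝ) (hh : LocallyIntegrableOn h (Set.Ici 0))
    (D : ℝ → ℝ) (hD : ∀ t, D t = ∫ s in (0:ℝ)..t, h s)
    (L : ℝ) (hL : 0 ≤ L)
    (hae : ∀ᵐ s ∂(volume : Measure ℝ), 0 ≤ s → (0 < D s → h s ≤ L * D s)) :
    ∀ t ≥ (0:ℝ), D t ≤ 0 := by
  intro t ht
  by_contra hpos
  push_neg at hpos
  have hD0 : D 0 = 0 := by simp [hD]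
  have ht0 : 0 < t := by
    rcases ht.lt_or_eq with h' | h'
    · exact h'
    · rw [← h', hD0] at hpos; exact absurd hpos (lt_irrefl 0)
  have hint : IntegrableOn h (Set.Icc 0 t) volume :=
    hh.integrableOn_compact_subset (Set.Icc_subset_Ici_self) isCompact_Icc
  have hcont : ContinuousOn D (Set.Icc 0 t) := by
    have h1 : ContinuousOn (fun x => ∫ s in (0:ℝ)..x, h s) (Set.uIcc 0 t) :=
      continuousOn_primitive_interval (by rwa [Set.uIcc_of_le ht])
    rw [Set.uIcc_of_le ht] at h1
    exact h1.congr fun x _ => hD x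
  set S : Set ℝ := Set.Icc 0 t ∩ D ⁻¹' Set.Iic 0 with hS
  have hSne : S.Nonempty := ⟨0, ⟨le_refl 0, le_of_lt ht0⟩, by simp [hD0]⟩
  have hSclosed : IsClosed S :=
    hcont.preimage_isClosed_of_isClosed isClosed_Icc isClosed_Iic
  have hScompact : IsCompact S :=
    isCompact_Icc.of_isClosed_subset hSclosed Set.inter_subset_left
  have hSbdd : BddAbove S := ⟨t, fun x hx => hx.1.2⟩
  set τ := sSup S with hτdef
  have hτS : τ ∈ S := hScompact.sSup_mem hSne
  have hτ0 : 0 ≤ τ := hτS.1.1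
  have hτt : τ ≤ t := hτS.1.2
  have hDτ : D τ ≤ 0 := hτS.2
  have hτlt : τ < t := by
    rcases hτt.lt_or_eq with h' | h'
    · exact h'
    · exact absurd (h' ▸ hDτ) (not_le.2 hpos)
  have hDpos : ∀ u ∈ Set.Ioc τ t, 0 < D u := by
    intro u hu
    by_contra hneg
    push_neg at hneg
    have hu' : u ∈ S := ⟨⟨le_trans hτ0 hu.1.le, hu.2⟩, hneg⟩
    exact absurd (le_csSup hSbdd hu') (not_le.2 hu.1)
  obtain ⟨x₀, hx₀, hmax⟩ := (isCompact_Icc (a := τ) (b := t)).exists_isMaxOn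
    ⟨τ, le_refl τ, hτt⟩ (hcont.mono (Set.Icc_subset_Icc hτ0 le_rfl))
  set C := D x₀ with hCdef
  have hCt : D t ≤ C := hmax ⟨hτt, le_refl t⟩
  have hCpos : 0 < C := lt_of_lt_of_le hpos hCt
  have hintτ : ∀ s ∈ Set.Icc τ t, IntegrableOn h (Set.Ioc τ s) volume := fun s hs =>
    hint.mono_set (fun x hx => ⟨le_trans hτ0 hx.1.le, le_trans hx.2 hs.2⟩)
  have hDint : ∀ s ∈ Set.Icc τ t, IntegrableOn (fun u => L * D u) (Set.Ioc τ s) volume := by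
    intro s hs
    have h1 : IntegrableOn (fun u => L * D u) (Set.Icc τ t) volume :=
      (continuousOn_const.mul (hcont.mono (Set.Icc_subset_Icc hτ0 le_rfl))).integrableOn_compact
        isCompact_Icc
    exact h1.mono_set (fun x hx => ⟨hx.1.le, le_trans hx.2 hs.2⟩)
  have key : ∀ n : ℕ, ∀ s ∈ Set.Icc τ t, D s ≤ C * (L * (s - τ)) ^ n / n.factorial := by
    intro n
    induction n with
    | zero => intro s hs; simpa using hmax hs
    | succ n ih =>
      intro s hs
      set K : ℝ := C * L ^ (n + 1) / n.factorial with hK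
      have hi1 : IntervalIntegrable h volume 0 τ := by
        rw [intervalIntegrable_iff_integrableOn_Ioc_of_le hτ0]
        exact hint.mono_set (fun x hx => ⟨hx.1.le, le_trans hx.2 hτt⟩)
      have hi2 : IntervalIntegrable h volume τ s := by
        rw [intervalIntegrable_iff_integrableOn_Ioc_of_le hs.1]
        exact hintτ s hs
      have hsplit : D s = D τ + ∫ u in τ..s, h u := by
        rw [hD s, hD τ, integral_add_adjacent_intervals hi1 hi2]
      have hstep1 : D s ≤ ∫ u in Set.Ioc τ s, h u := by
        rw [hsplit, ← intervalIntegral.integral_of_le hs.1]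
        linarith
      have hstep2 : (∫ u in Set.Ioc τ s, h u) ≤ ∫ u in Set.Ioc τ s, L * D u := by
        apply setIntegral_mono_ae_restrict (hintτ s hs) (hDint s hs)
        rw [Filter.EventuallyLE, ae_restrict_iff' measurableSet_Ioc]
        filter_upwards [hae] with u hu huIoc
        exact hu (le_trans hτ0 huIoc.1.le) (hDpos u ⟨huIoc.1, le_trans huIoc.2 hs.2⟩)
      have hstep3 : (∫ u in Set.Ioc τ s, L * D u)
          ≤ ∫ u in Set.Ioc τ s, K * (u - τ) ^ n := by
        apply setIntegral_mono_on (hDint s hs)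
        · exact ((continuous_const.mul ((continuous_id.sub continuous_const).pow
            n)).integrableOn_Ioc)
        · exact measurableSet_Ioc
        · intro u hu
          have h1 : L * D u ≤ L * (C * (L * (u - τ)) ^ n / n.factorial) :=
            mul_le_mul_of_nonneg_left (ih u ⟨hu.1.le, le_trans hu.2 hs.2⟩) hL
          have h2 : L * (C * (L * (u - τ)) ^ n / n.factorial) = K * (u - τ) ^ n := by
            rw [hK, mul_pow]; ring
          linarith [h1, h2.le]
      have hcomp : (∫ u in Set.Ioc τ s, K * (u - τ) ^ n)
          = C * (L * (s - τ)) ^ (n + 1) / (n + 1).factorial := by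
        rw [← intervalIntegral.integral_of_le hs.1, intervalIntegral.integral_const_mul]
        have h2 : (∫ u in τ..s, (u - τ) ^ n) = (s - τ) ^ (n + 1) / (n + 1) := by
          rw [intervalIntegral.integral_comp_sub_right (fun x => x ^ n) τ, integral_pow]
          simp
        rw [h2, hK, Nat.factorial_succ, mul_pow]
        have hfn : (n.factorial : ℝ) ≠ 0 := Nat.cast_ne_zero.2 n.factorial_ne_zero
        have hn1 : ((n : ℝ) + 1) ≠ 0 := by positivity
        push_cast
        field_simp
      calc D s ≤ ∫ u in Set.Ioc τ s, h u := hstep1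
        _ ≤ ∫ u in Set.Ioc τ s, L * D u := hstep2
        _ ≤ ∫ u in Set.Ioc τ s, K * (u - τ) ^ n := hstep3
        _ = C * (L * (s - τ)) ^ (n + 1) / (n + 1).factorial := hcomp
  have htend : Filter.Tendsto (fun n : ℕ => C * (L * (t - τ)) ^ n / n.factorial)
      Filter.atTop (nhds 0) := by
    have h1 := (FloorSemiring.tendsto_pow_div_factorial_atTop (L * (t - τ))).const_mul C
    simpa [mul_div_assoc] using h1
  have hfin : D t ≤ 0 := ge_of_tendsto' htend (fun n => key n t ⟨hτt, le_refl t⟩)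
  exact absurd hpos (not_lt.2 hfin)
end

section
/- Let x ≥ 0, let α ∈ [0,1], and let f, g : [0,∞) → ℝ be continuous with f(0) = g(0) = x. Assume the difference t ↦ g(t) − f(t) is nondecreasing (in particular g ≥ f). Define the running maxima M_f(t) = sup_{0 ≤ s ≤ t} f(s) and M_g(t) = sup_{0 ≤ s ≤ t} g(s). Then for every t ≥ 0, f(t) − α·M_f(t) ≤ g(t) − α·M_g(t). -/
/-- Deterministic drawdown comparison: if `g - f` is nondecreasing on `[0,∞)` and
`f(0) = g(0) = x ≥ 0`, then `f - α·(running max of f) ≤ g - α·(running max of g)`. -/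
theorem drawdown_comparison
    (x : ℝ) (hx : 0 ≤ x) (α : ℝ) (hα : α ∈ Set.Icc (0:ℝ) 1)
    (f g : ℝ → ℝ)
    (hf_cont : ContinuousOn f (Set.Ici 0)) (hg_cont : ContinuousOn g (Set.Ici 0))
    (hf0 : f 0 = x) (hg0 : g 0 = x)
    (hmono : MonotoneOn (fun t => g t - f t) (Set.Ici 0)) :
    ∀ t ≥ (0:ℝ),
      f t - α * sSup (f '' Set.Icc 0 t) ≤ g t - α * sSup (g '' Set.Icc 0 t) := by
  intro t ht
  have hsub : Set.Icc (0:ℝ) t ⊆ Set.Ici 0 := fun s hs => hs.1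
  have hne : (Set.Icc (0:ℝ) t).Nonempty := ⟨0, le_refl 0, ht⟩
  have hbfA : BddAbove (f '' Set.Icc 0 t) :=
    (isCompact_Icc.image_of_continuousOn (hf_cont.mono hsub)).bddAbove
  set Mf := sSup (f '' Set.Icc 0 t) with hMf
  set Mg := sSup (g '' Set.Icc 0 t) with hMg
  have hgf : 0 ≤ g t - f t := by
    have := hmono (Set.self_mem_Ici) (by exact ht) ht
    simpa [hf0, hg0] using this
  have hMg_le : Mg ≤ Mf + (g t - f t) := by
    apply csSup_le (hne.image g)
    rintro y ⟨s, hs, rfl⟩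
    have h1 : g s - f s ≤ g t - f t := hmono (hs.1) ht hs.2
    have h2 : f s ≤ Mf := le_csSup hbfA ⟨s, hs, rfl⟩
    linarith
  have hα0 := hα.1
  have hα1 := hα.2
  have hMf_le : Mf ≤ Mg := by
    apply csSup_le (hne.image f)
    rintro y ⟨s, hs, rfl⟩
    have h1 : g s - f s ≥ 0 := by
      have := hmono Set.self_mem_Ici hs.1 hs.1
      simpa [hf0, hg0] using this
    have h2 : g s ≤ Mg :=
      le_csSup (isCompact_Icc.image_of_continuousOn (hg_cont.mono hsub)).bddAbove ⟨s, hs, rfl⟩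
    linarith
  nlinarith [mul_le_mul_of_nonneg_left hMg_le hα0, mul_le_mul_of_nonneg_right hα1 hgf]
end

section
/- Let x ≥ 0, α ∈ [0,1], c ∈ ℝ, let w : [0,∞) → ℝ be continuous with w(0) = 0, and let a : [0,∞) → ℝ be locally integrable with a(s) ≤ c for almost every s ≥ 0. Define f(t) = x + ∫₀ᵗ a(s) ds + w(t) and g(t) = x + c·t + w(t). Then for every t ≥ 0, f(t) − α·sup_{0 ≤ s ≤ t} f(s) ≤ g(t) − α·sup_{0 ≤ s ≤ t} g(s). -/
open MeasureTheory intervalIntegral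

/-- Drawdown comparison against the extremal process with constant drift `c`:
if `f(t) = x + ∫₀ᵗ a + w(t)` with `a ≤ c` a.e. and `g(t) = x + c·t + w(t)`, then
`f - α·(running max of f) ≤ g - α·(running max of g)`. -/
theorem drawdown_comparison_constant_drift
    (x : ℝ) (hx : 0 ≤ x) (α : ℝ) (hα : α ∈ Set.Icc (0:ℝ) 1) (c : ℝ)
    (w : ℝ → ℝ) (hw_cont : ContinuousOn w (Set.Ici 0)) (hw0 : w 0 = 0)
    (a : ℝ → ℝ) (ha : LocallyIntegrableOn a (Set.Ici 0))
    (hac : ∀ᵐ s ∂(volume : Measure ℝ), 0 ≤ s → a s ≤ c)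
    (f g : ℝ → ℝ)
    (hf : ∀ t, f t = x + (∫ s in (0:ℝ)..t, a s) + w t)
    (hg : ∀ t, g t = x + c * t + w t) :
    ∀ t ≥ (0:ℝ),
      f t - α * sSup (f '' Set.Icc 0 t) ≤ g t - α * sSup (g '' Set.Icc 0 t) := by
  intro t ht
  have hsub : Set.Icc (0:ℝ) t ⊆ Set.Ici 0 := fun u hu => hu.1
  -- interval integrability on subintervals of [0, t]
  have hII : ∀ s₁ s₂ : ℝ, 0 ≤ s₁ → s₁ ≤ s₂ → s₂ ≤ t → IntervalIntegrable a volume s₁ s₂ := by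
    intro s₁ s₂ h1 h12 h2t
    have hint : IntegrableOn a (Set.Icc s₁ s₂) volume :=
      ha.integrableOn_compact_subset
        (fun u hu => le_trans h1 hu.1) isCompact_Icc
    have : IntegrableOn a (Set.uIcc s₁ s₂) volume := by
      rwa [Set.uIcc_of_le h12]
    exact this.intervalIntegrable
  -- monotonicity of the excess h(s) = c s - ∫₀ˢ a
  have hmono : ∀ s ∈ Set.Icc (0:ℝ) t,
      c * s - (∫ u in (0:ℝ)..s, a u) ≤ c * t - (∫ u in (0:ℝ)..t, a u) := by
    intro s hs
    have h1 : IntervalIntegrable a volume 0 s := hII 0 s le_rfl hs.1 hs.2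
    have h2 : IntervalIntegrable a volume s t := hII s t hs.1 hs.2 le_rfl
    have hsplit : (∫ u in (0:ℝ)..s, a u) + (∫ u in s..t, a u) = ∫ u in (0:ℝ)..t, a u :=
      integral_add_adjacent_intervals h1 h2
    have hae : ∀ᵐ u ∂(volume : Measure ℝ).restrict (Set.Icc s t), a u ≤ c := by
      refine (ae_restrict_iff' measurableSet_Icc).mpr ?_
      filter_upwards [hac] with u hu hmem
      exact hu (le_trans hs.1 hmem.1)
    have hbound : (∫ u in s..t, a u) ≤ ∫ _ in s..t, c :=
      integral_mono_ae_restrict hs.2 h2 intervalIntegrable_const hae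
    rw [intervalIntegral.integral_const, smul_eq_mul] at hbound
    nlinarith [hbound, hsplit]
  have ht0 : 0 ≤ c * t - (∫ u in (0:ℝ)..t, a u) := by
    have := hmono 0 ⟨le_rfl, ht⟩
    simpa using this
  -- continuity of f on [0, t], hence bounded image
  have hintt : IntegrableOn a (Set.uIcc (0:ℝ) t) volume := by
    rw [Set.uIcc_of_le ht]
    exact ha.integrableOn_compact_subset hsub isCompact_Icc
  have hfc : ContinuousOn f (Set.Icc 0 t) := by
    have h1 : ContinuousOn (fun s => x + (∫ u in (0:ℝ)..s, a u) + w s) (Set.Icc 0 t) := by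
      refine (continuousOn_const.add ?_).add (hw_cont.mono hsub)
      have := intervalIntegral.continuousOn_primitive_interval hintt
      rwa [Set.uIcc_of_le ht] at this
    exact h1.congr fun s _ => hf s
  have hne : Set.Nonempty (Set.Icc (0:ℝ) t) := ⟨0, le_rfl, ht⟩
  have hB : BddAbove (f '' Set.Icc 0 t) :=
    (isCompact_Icc.image_of_continuousOn hfc).bddAbove
  set Sf := sSup (f '' Set.Icc 0 t)
  set Sg := sSup (g '' Set.Icc 0 t)
  set d := c * t - (∫ u in (0:ℝ)..t, a u) with hd
  have hSg : Sg ≤ Sf + d := by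
    refine csSup_le (hne.image g) ?_
    rintro y ⟨s, hs, rfl⟩
    have hfs : f s ≤ Sf := le_csSup hB (Set.mem_image_of_mem f hs)
    have hgs : g s = f s + (c * s - (∫ u in (0:ℝ)..s, a u)) := by
      rw [hf s, hg s]; ring
    have := hmono s hs
    rw [hgs]
    linarith
  have hgt : g t = f t + d := by rw [hf t, hg t, hd]; ring
  have hmul : α * Sg ≤ α * (Sf + d) := mul_le_mul_of_nonneg_left hSg hα.1
  have h1d : 0 ≤ (1 - α) * d := mul_nonneg (by linarith [hα.2]) ht0
  rw [hgt]
  nlinarith [hmul, h1d]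
end

section
/- Let η > 0, m > 0, σ_S > 0, σ_I > 0, and define G : ℝ → ℝ by G(u) = (η + u·m) / (σ_S² + σ_I²·u²). Set u* = (√(η²σ_I² + m²σ_S²) − η·σ_I) / (m·σ_I). Then G(u) ≤ G(u*) for all u ∈ ℝ, and u* is the unique maximizer of G on ℝ. -/
/-- Optimal investment: `u* = (√(η²σ_I² + m²σ_S²) - ησ_I)/(mσ_I)` is the unique
maximizer of `G(u) = (η + um)/(σ_S² + σ_I²u²)` on `ℝ`. -/
theorem optimal_investment
    (η m σS σI : ℝ) (hη : 0 < η) (hm : 0 < m) (hσS : 0 < σS) (hσI : 0 < σI)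
    (G : ℝ → ℝ) (hG : ∀ u, G u = (η + u * m) / (σS ^ 2 + σI ^ 2 * u ^ 2))
    (ustar : ℝ)
    (hustar : ustar = (Real.sqrt (η ^ 2 * σI ^ 2 + m ^ 2 * σS ^ 2) - η * σI) / (m * σI)) :
    (∀ u : ℝ, G u ≤ G ustar) ∧ (∀ u : ℝ, u ≠ ustar → G u < G ustar) := by
  set s := Real.sqrt (η ^ 2 * σI ^ 2 + m ^ 2 * σS ^ 2) with hs
  have hs2 : s ^ 2 = η ^ 2 * σI ^ 2 + m ^ 2 * σS ^ 2 :=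
    Real.sq_sqrt (by positivity)
  have hsnn : 0 ≤ s := Real.sqrt_nonneg _
  have hsgt : η * σI < s := by
    nlinarith [sq_nonneg (s - η * σI), sq_nonneg (s + η * σI), mul_pos hη hσI,
      mul_pos (mul_pos hm hm) (mul_pos hσS hσS)]
  have hu2 : m * σI * ustar = s - η * σI := by
    rw [hustar]
    field_simp
  have hupos : 0 < ustar := by
    have h1 : 0 < m * σI := mul_pos hm hσI
    nlinarith [hu2]
  have hrel : m ^ 2 * σI ^ 2 * ustar ^ 2 + 2 * η * m * σI ^ 2 * ustar = m ^ 2 * σS ^ 2 := by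
    nlinarith [hu2, hs2]
  have key : ∀ u : ℝ, u ≠ ustar → G u < G ustar := by
    intro u hu
    rw [hG u, hG ustar]
    have hD : 0 < σS ^ 2 + σI ^ 2 * u ^ 2 := by positivity
    have hDs : 0 < σS ^ 2 + σI ^ 2 * ustar ^ 2 := by positivity
    rw [div_lt_div_iff₀ hD hDs]
    have hsq : 0 < (u - ustar) ^ 2 := by
      have : u - ustar ≠ 0 := sub_ne_zero.mpr hu
      positivity
    have hpos : 0 < η + m * ustar := by nlinarith [mul_pos hm hupos]
    have hrel' : m * σI ^ 2 * ustar ^ 2 + 2 * η * σI ^ 2 * ustar = m * σS ^ 2 := by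
      apply mul_left_cancel₀ hm.ne'
      linear_combination hrel
    have hiden : (η + ustar * m) * (σS ^ 2 + σI ^ 2 * u ^ 2)
        - (η + u * m) * (σS ^ 2 + σI ^ 2 * ustar ^ 2)
        = σI ^ 2 * (u - ustar) ^ 2 * (η + m * ustar) := by
      linear_combination (u - ustar) * hrel'
    nlinarith [mul_pos (mul_pos (pow_pos hσI 2) hsq) hpos]
  refine ⟨fun u => ?_, key⟩
  by_cases h : u = ustar
  · rw [h]
  · exact (key u h).le
end

section
/- Let m > 0, σ_S > 0, σ_I > 0 and 0 < η < θ with θ ≤ η + √(η² + m²σ_S²/σ_I²). Set K = m²σ_S² + θ²σ_I², A* = 2mσ_S²(θ − η)/K and b* = 2θσ_I²(θ − η)/K (so b* ≤ 1 under the stated condition on θ). Then for all b ∈ [0,1] and A ∈ ℝ with σ_S²b² + σ_I²A² > 0, (bθ − (θ − η) + mA) / (σ_S²b² + σ_I²A²) ≤ (b*θ − (θ − η) + mA*) / (σ_S²b*² + σ_I²A*²). -/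
/-- Combined reinsurance and investment: `(b*, A*)` maximizes the drift-to-variance
ratio `(bθ - (θ - η) + mA)/(σ_S²b² + σ_I²A²)` over `b ∈ [0,1]`, `A ∈ ℝ`. -/
theorem reinsurance_and_investment_optimal
    (m σS σI η θ : ℝ) (hm : 0 < m) (hσS : 0 < σS) (hσI : 0 < σI)
    (hη : 0 < η) (hθ : η < θ)
    (hθ_bound : θ ≤ η + Real.sqrt (η ^ 2 + m ^ 2 * σS ^ 2 / σI ^ 2))
    (K Astar bstar : ℝ)
    (hK : K = m ^ 2 * σS ^ 2 + θ ^ 2 * σI ^ 2)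
    (hAstar : Astar = 2 * m * σS ^ 2 * (θ - η) / K)
    (hbstar : bstar = 2 * θ * σI ^ 2 * (θ - η) / K) :
    bstar ≤ 1 ∧
      ∀ b ∈ Set.Icc (0:ℝ) 1, ∀ A : ℝ, 0 < σS ^ 2 * b ^ 2 + σI ^ 2 * A ^ 2 →
        (b * θ - (θ - η) + m * A) / (σS ^ 2 * b ^ 2 + σI ^ 2 * A ^ 2) ≤
          (bstar * θ - (θ - η) + m * Astar) /
            (σS ^ 2 * bstar ^ 2 + σI ^ 2 * Astar ^ 2) := by
  have hc : 0 < θ - η := by linarith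
  have hθ0 : 0 < θ := by linarith
  have hK0 : 0 < K := by
    rw [hK]; positivity
  -- from the bound on θ: (θ-η)^2 ≤ η^2 + m^2 σS^2/σI^2
  have harg : (0:ℝ) ≤ η ^ 2 + m ^ 2 * σS ^ 2 / σI ^ 2 := by positivity
  have hsq : (θ - η) ^ 2 ≤ η ^ 2 + m ^ 2 * σS ^ 2 / σI ^ 2 := by
    have h1 : θ - η ≤ Real.sqrt (η ^ 2 + m ^ 2 * σS ^ 2 / σI ^ 2) := by linarith
    calc (θ - η) ^ 2 ≤ Real.sqrt (η ^ 2 + m ^ 2 * σS ^ 2 / σI ^ 2) ^ 2 := by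
          apply pow_le_pow_left₀ hc.le h1
      _ = η ^ 2 + m ^ 2 * σS ^ 2 / σI ^ 2 := Real.sq_sqrt harg
  have hsq' : (θ ^ 2 - 2 * θ * η) * σI ^ 2 ≤ m ^ 2 * σS ^ 2 := by
    have h2 : ((θ - η) ^ 2) * σI ^ 2 ≤ (η ^ 2 + m ^ 2 * σS ^ 2 / σI ^ 2) * σI ^ 2 :=
      mul_le_mul_of_nonneg_right hsq (by positivity)
    have h3 : m ^ 2 * σS ^ 2 / σI ^ 2 * σI ^ 2 = m ^ 2 * σS ^ 2 := by
      field_simp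
    nlinarith [h2, h3]
  constructor
  · rw [hbstar, div_le_one hK0, hK]
    nlinarith [hsq']
  · intro b hb A hV
    -- the optimal ratio equals K / (4 (θ-η) σS² σI²)
    have hVs : σS ^ 2 * bstar ^ 2 + σI ^ 2 * Astar ^ 2 =
        4 * (θ - η) ^ 2 * σS ^ 2 * σI ^ 2 / K := by
      rw [hAstar, hbstar]
      field_simp
      rw [hK]; ring
    have hdrift : bstar * θ - (θ - η) + m * Astar = θ - η := by
      rw [hAstar, hbstar]
      field_simp
      rw [hK]; ring
    have hrhs : (bstar * θ - (θ - η) + m * Astar) /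
        (σS ^ 2 * bstar ^ 2 + σI ^ 2 * Astar ^ 2) =
        K / (4 * (θ - η) * σS ^ 2 * σI ^ 2) := by
      rw [hVs, hdrift]
      rw [div_div_eq_mul_div]
      rw [div_eq_div_iff (by positivity) (by positivity)]
      ring
    rw [hrhs]
    rw [div_le_div_iff₀ hV (by positivity)]
    have key : K * (K * (σS ^ 2 * b ^ 2 + σI ^ 2 * A ^ 2) -
        (b * θ - (θ - η) + m * A) * (4 * (θ - η) * σS ^ 2 * σI ^ 2)) =
        σS ^ 2 * (K * b - 2 * (θ - η) * σI ^ 2 * θ) ^ 2 +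
          σI ^ 2 * (K * A - 2 * (θ - η) * σS ^ 2 * m) ^ 2 := by
      subst hK; ring
    have hpos : 0 ≤ K * (K * (σS ^ 2 * b ^ 2 + σI ^ 2 * A ^ 2) -
        (b * θ - (θ - η) + m * A) * (4 * (θ - η) * σS ^ 2 * σI ^ 2)) := by
      rw [key]; positivity
    have hD := (mul_nonneg_iff_of_pos_left hK0).mp hpos
    linarith [hD]
end

section
/- Define f : (0,∞) → ℝ by f(u) = (2(1 − e^{−u}) − 1) / (2(1 − e^{−u} − u e^{−u})). Then there exists a unique u* ∈ (1, 2) satisfying u* = 2 − 2e^{−u*}; moreover f(u) ≤ f(u*) = 1/u* for all u ∈ (0,∞), with equality if and only if u = u*. -/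
/-!
At a fixed point `s = 2 - 2e^{-s}` we have `e^{-s} = 1 - s/2`, so `f s = (s - 1)/(s(s - 1)) = 1/s`,
and `1/s - f u` has the sign of `2e^{-s} - 2e^{-u}(1 + (u - s)) = 2e^{-u}(e^{u-s} - 1 - (u - s))`,
which is positive for `u ≠ s` by the tangent-line bound `x + 1 < e^x`. Every positive fixed point is
therefore the strict maximizer of `f`, which forces uniqueness; existence is the intermediate value
theorem on `[1, 2]`.
-/

open Real Set

namespace XLReinsurance

noncomputable def ratio (u : ℝ) : ℝ :=
  (2 * (1 - exp (-u)) - 1) / (2 * (1 - exp (-u) - u * exp (-u)))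

theorem exp_neg_mul_one_add_sub_lt {a b : ℝ} (h : a ≠ b) :
    exp (-a) * (1 + (a - b)) < exp (-b) :=
  calc exp (-a) * (1 + (a - b)) < exp (-a) * exp (a - b) := by
        gcongr
        linarith [add_one_lt_exp (sub_ne_zero.2 h)]
    _ = exp (-b) := by rw [← exp_add]; ring_nf

theorem ratio_denom_pos {u : ℝ} (hu : 0 < u) : 0 < 2 * (1 - exp (-u) - u * exp (-u)) := by
  have h := exp_neg_mul_one_add_sub_lt hu.ne'
  rw [neg_zero, exp_zero] at h
  linarith

theorem ratio_of_fixed {s : ℝ} (hs : 0 < s) (hfix : s = 2 - 2 * exp (-s)) :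
    ratio s = 1 / s := by
  have hexp : exp (-s) = 1 - s / 2 := by linarith
  have hD := ratio_denom_pos hs
  rw [hexp] at hD
  rw [ratio, hexp, div_eq_div_iff hD.ne' hs.ne']
  ring

theorem ratio_lt_of_fixed {s u : ℝ} (hs : 0 < s) (hfix : s = 2 - 2 * exp (-s)) (hu : 0 < u)
    (hne : u ≠ s) : ratio u < 1 / s := by
  have key := exp_neg_mul_one_add_sub_lt hne
  rw [ratio, div_lt_div_iff₀ (ratio_denom_pos hu) hs]
  nlinarith

theorem exists_fixed_mem_Ioo : ∃ s ∈ Ioo (1 : ℝ) 2, s = 2 - 2 * exp (-s) := by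
  have he : exp (-1) < 1 / 2 := by
    rw [exp_neg, inv_lt_comm₀ (exp_pos 1) (by norm_num)]
    linarith [add_one_lt_exp (one_ne_zero : (1 : ℝ) ≠ 0)]
  have hcont : ContinuousOn (fun u : ℝ => u - 2 + 2 * exp (-u)) (Icc 1 2) := by fun_prop
  have hzero_mem : (0 : ℝ) ∈ Ioo (1 - 2 + 2 * exp (-1)) (2 - 2 + 2 * exp (-2)) :=
    ⟨by linarith, by linarith [exp_pos (-2)]⟩
  obtain ⟨s, hs, hzero⟩ := intermediate_value_Ioo (by norm_num) hcont hzero_mem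
  exact ⟨s, hs, by linarith⟩

end XLReinsurance

open XLReinsurance in
/-- The excess-of-loss reinsurance optimization with exponential claims (`λ = 1`,
`θ = 2`, `η = 1`): the unique fixed point `u* ∈ (1,2)` of `u = 2 - 2e^{-u}` is the
unique maximizer of `f(u) = (2(1 - e^{-u}) - 1)/(2(1 - e^{-u} - u e^{-u}))` on `(0,∞)`,
with maximal value `1/u*`. -/
theorem xl_reinsurance_optimal
    (f : ℝ → ℝ)
    (hf : ∀ u > (0:ℝ), f u =
      (2 * (1 - Real.exp (-u)) - 1) / (2 * (1 - Real.exp (-u) - u * Real.exp (-u)))) :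
    ∃ ustar : ℝ, ustar ∈ Set.Ioo (1:ℝ) 2 ∧ ustar = 2 - 2 * Real.exp (-ustar) ∧
      (∀ v ∈ Set.Ioo (1:ℝ) 2, v = 2 - 2 * Real.exp (-v) → v = ustar) ∧
      f ustar = 1 / ustar ∧
      ∀ u > (0:ℝ), f u ≤ f ustar ∧ (f u = f ustar ↔ u = ustar) := by
  obtain ⟨s, hs, hfix⟩ := exists_fixed_mem_Ioo
  have hs0 : 0 < s := one_pos.trans hs.1
  have hfs : f s = 1 / s := (hf s hs0).trans (ratio_of_fixed hs0 hfix)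
  have hlt : ∀ u > 0, u ≠ s → f u < f s := fun u hu hne =>
    hfs ▸ (hf u hu).trans_lt (ratio_lt_of_fixed hs0 hfix hu hne)
  refine ⟨s, hs, hfix, fun v hv hvfix => ?_, hfs, fun u hu => ?_⟩
  · by_contra hne
    have hv0 : 0 < v := one_pos.trans hv.1
    have h₁ := ratio_lt_of_fixed hs0 hfix hv0 hne
    have h₂ := ratio_lt_of_fixed hv0 hvfix hs0 (Ne.symm hne)
    rw [ratio_of_fixed hv0 hvfix] at h₁
    rw [ratio_of_fixed hs0 hfix] at h₂
    exact h₁.asymm h₂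
  · rcases eq_or_ne u s with rfl | hne
    · exact ⟨le_rfl, iff_of_true rfl rfl⟩
    · exact ⟨(hlt u hu hne).le, iff_of_false (hlt u hu hne).ne hne⟩
end
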